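/- arXiv:2008.11032 — 3 statements merged into one kernel-verified Lean document; each statement's English description precedes it below -/
import Mathlib

section
/- Let g ∈ 𝒮(ℝ), σ > 0, μ ∈ ℝ, a > 0. Suppose x(t) = Σ_{k=1}^K A_k(t) e^{i2πφ_k(t)} with A_k ∈ C¹(ℝ) ∩ L^∞, φ_k ∈ C²(ℝ), |A'_k(t)| ≤ ε₁ and |φ''_k(t)| ≤ ε₂ for all t. Define W̃(a,b) = ∫ x(b+at)(1/σ)g(t/σ)e^{−i2πμt}dt. Then |W̃(a,b) − Σ_{k=1}^K A_k(b)e^{i2πφ_k(b)} ĝ(σ(μ − aφ'_k(b)))| ≤ aσ (K ε₁ I₁ + π ε₂ I₂ a σ Σ_{k=1}^K A_k(b)), where I_n = ∫_ℝ |tⁿ g(t)| dt. -/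
/-!
After the substitution `t ↦ σ t` each component contributes
`∫ A(b + aσs) e^{i2πφ(b + aσs)} g(s) e^{-i2πσμs} ds`, while the corresponding main term is the
same integral with the component replaced by its linearization `A(b) e^{i2π(φ(b) + φ'(b)aσs)}`.
The difference of a component and its linearization at `b + h` is at most `|A(b+h) - A(b)|`
plus `A(b)` times the error of the phase, that is at most `ε₁|h| + πε₂A(b)h²` by the mean value
theorem and the second-order Taylor bound; integrating against `|g|` gives the moments `I₁, I₂`.
-/

open Real MeasureTheory

theorem abs_sub_le_mul_abs_sub_of_abs_deriv_le {f : ℝ → ℝ} (hf : Differentiable ℝ f) {C : ℝ}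
    (hC : ∀ t, |deriv f t| ≤ C) (x y : ℝ) : |f y - f x| ≤ C * |y - x| :=
  Convex.norm_image_sub_le_of_norm_deriv_le (fun t _ => hf t) (fun t _ => hC t) convex_univ
    (Set.mem_univ x) (Set.mem_univ y)

theorem abs_sub_sub_deriv_mul_le {f : ℝ → ℝ} (hf : Differentiable ℝ f)
    (hf' : Differentiable ℝ (deriv f)) {C : ℝ} (hC : ∀ t, |deriv (deriv f) t| ≤ C) (x h : ℝ) :
    |f (x + h) - f x - deriv f x * h| ≤ C / 2 * h ^ 2 := by
  have hderiv : ∀ t ∈ Set.uIcc (0 : ℝ) 1, HasDerivAt (fun t => f (x + t * h) - deriv f x * h * t)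
      ((deriv f (x + t * h) - deriv f x) * h) t := by
    intro t _
    have := ((hf (x + t * h)).hasDerivAt.comp t (((hasDerivAt_id' t).mul_const h).const_add x)).sub
      ((hasDerivAt_id' t).const_mul (deriv f x * h))
    exact this.congr_deriv (by ring)
  have hFTC := intervalIntegral.integral_eq_sub_of_hasDerivAt hderiv
    (((hf'.continuous.comp (by fun_prop)).sub continuous_const).mul continuous_const
      |>.intervalIntegrable 0 1)
  have hbound : ∀ t ∈ Set.Ioc (0 : ℝ) 1, ‖(deriv f (x + t * h) - deriv f x) * h‖ ≤ C * h ^ 2 * t := by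
    intro t ht
    rw [norm_mul, Real.norm_eq_abs]
    calc |deriv f (x + t * h) - deriv f x| * |h| ≤ C * |x + t * h - x| * |h| := by
          gcongr; exact abs_sub_le_mul_abs_sub_of_abs_deriv_le hf' hC _ _
      _ = C * h ^ 2 * t := by
          rw [add_sub_cancel_left, abs_mul, abs_of_pos ht.1, ← sq_abs h]; ring
  have := intervalIntegral.norm_integral_le_of_norm_le zero_le_one
    (Filter.Eventually.of_forall hbound)
    ((continuous_const.mul continuous_id).intervalIntegrable (μ := volume) _ _)
  rw [hFTC, intervalIntegral.integral_const_mul, integral_id] at this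
  simp only [one_mul, zero_mul, add_zero, mul_one, mul_zero, sub_zero] at this
  rw [Real.norm_eq_abs, sub_right_comm] at this
  linarith

theorem Complex.norm_ofReal_mul_exp_sub_ofReal_mul_exp_le (r s α β : ℝ) (hs : 0 ≤ s) :
    ‖(r : ℂ) * exp (I * α) - s * exp (I * β)‖ ≤ |r - s| + s * |α - β| := by
  have hsplit : (r : ℂ) * exp (I * α) - s * exp (I * β)
      = ((r - s : ℝ) : ℂ) * exp (I * α) + s * exp (I * β) * (exp (I * (α - β : ℝ)) - 1) := by
    rw [mul_sub, mul_assoc, ← exp_add]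
    push_cast
    ring_nf
  calc _ ≤ ‖((r - s : ℝ) : ℂ) * exp (I * α)‖ + ‖s * exp (I * β) * (exp (I * (α - β : ℝ)) - 1)‖ :=
        hsplit ▸ norm_add_le _ _
    _ ≤ |r - s| + s * |α - β| := by
        simp only [norm_mul, norm_real, norm_exp_I_mul_ofReal, Real.norm_eq_abs, abs_of_nonneg hs,
          mul_one]
        gcongr
        exact Real.norm_exp_I_mul_ofReal_sub_one_le

theorem norm_mul_cexp_sub_linearization_le {A φ : ℝ → ℝ} {ε₁ ε₂ : ℝ}
    (hA : Differentiable ℝ A) (hA' : ∀ t, |deriv A t| ≤ ε₁)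
    (hφ : Differentiable ℝ φ) (hφ' : Differentiable ℝ (deriv φ))
    (hφ'' : ∀ t, |deriv (deriv φ) t| ≤ ε₂) {b : ℝ} (hAb : 0 ≤ A b) (h : ℝ) :
    ‖(A (b + h) : ℂ) * Complex.exp (Complex.I * (2 * π * (φ (b + h) : ℂ)))
        - A b * Complex.exp (Complex.I * (2 * π * (φ b : ℂ)))
          * Complex.exp (Complex.I * (2 * π * ((deriv φ b * h : ℝ) : ℂ)))‖
      ≤ ε₁ * |h| + π * ε₂ * A b * h ^ 2 := by
  have hphase : |2 * π * φ (b + h) - 2 * π * (φ b + deriv φ b * h)| ≤ 2 * π * (ε₂ / 2 * h ^ 2) := by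
    rw [← mul_sub, ← sub_sub, abs_mul, abs_of_pos (by positivity)]
    gcongr
    exact abs_sub_sub_deriv_mul_le hφ hφ' hφ'' b h
  have hamp : |A (b + h) - A b| ≤ ε₁ * |h| := by
    simpa using abs_sub_le_mul_abs_sub_of_abs_deriv_le hA hA' b (b + h)
  calc _ = ‖(A (b + h) : ℂ) * Complex.exp (Complex.I * (2 * π * φ (b + h) : ℝ))
        - A b * Complex.exp (Complex.I * (2 * π * (φ b + deriv φ b * h) : ℝ))‖ := by
        rw [mul_assoc (A b : ℂ), ← Complex.exp_add]
        push_cast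
        ring_nf
    _ ≤ |A (b + h) - A b| + A b * |2 * π * φ (b + h) - 2 * π * (φ b + deriv φ b * h)| :=
        Complex.norm_ofReal_mul_exp_sub_ofReal_mul_exp_le _ _ _ _ hAb
    _ ≤ ε₁ * |h| + A b * (2 * π * (ε₂ / 2 * h ^ 2)) := by gcongr
    _ = ε₁ * |h| + π * ε₂ * A b * h ^ 2 := by ring

theorem SchwartzMap.integrable_abs_pow_mul_norm {F : Type*} [NormedAddCommGroup F]
    [NormedSpace ℝ F] (g : SchwartzMap ℝ F) (n : ℕ) : Integrable fun t : ℝ => |t| ^ n * ‖g t‖ := by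
  simpa only [Real.norm_eq_abs] using g.integrable_pow_mul volume n

theorem SchwartzMap.integrable_and_norm_integral_sub_le_of_norm_sub_le {E F : Type*}
    [NormedAddCommGroup E] [NormedSpace ℝ E] [NormedAddCommGroup F] [NormedSpace ℝ F]
    (g : SchwartzMap ℝ F) {u v : ℝ → E} (hu : AEStronglyMeasurable u) (hv : Integrable v) {α β : ℝ}
    (huv : ∀ t, ‖u t - v t‖ ≤ α * (|t| ^ 1 * ‖g t‖) + β * (|t| ^ 2 * ‖g t‖)) :
    Integrable u ∧
      ‖(∫ t, u t) - ∫ t, v t‖ ≤ α * (∫ t, |t| ^ 1 * ‖g t‖) + β * ∫ t, |t| ^ 2 * ‖g t‖ := by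
  have hI₁ := (g.integrable_abs_pow_mul_norm 1).const_mul α
  have hI₂ := (g.integrable_abs_pow_mul_norm 2).const_mul β
  have huv' : Integrable (u - v) := (hI₁.add hI₂).mono' (hu.sub hv.1) (ae_of_all _ huv)
  have hu' : Integrable u := by simpa using huv'.add hv
  refine ⟨hu', ?_⟩
  rw [← integral_sub hu' hv, ← integral_const_mul, ← integral_const_mul, ← integral_add hI₁ hI₂]
  exact norm_integral_le_of_norm_le (hI₁.add hI₂) (ae_of_all _ huv)

theorem Complex.norm_exp_neg_two_pi_mul_I (ξ t : ℝ) :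
    ‖exp (-(2 * π * ξ * t) * I)‖ = 1 := by
  simpa using norm_exp_ofReal_mul_I (-(2 * π * ξ * t))

theorem norm_integral_mul_cexp_sub_linearization_le (g : SchwartzMap ℝ ℂ) {A φ : ℝ → ℝ} {ε₁ ε₂ : ℝ}
    (hA : Differentiable ℝ A) (hA' : ∀ t, |deriv A t| ≤ ε₁)
    (hφ : Differentiable ℝ φ) (hφ' : Differentiable ℝ (deriv φ))
    (hφ'' : ∀ t, |deriv (deriv φ) t| ≤ ε₂) {b c : ℝ} (hAb : 0 ≤ A b) (hc : 0 ≤ c) (μ : ℝ) :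
    Integrable (fun s : ℝ => (A (b + c * s) : ℂ) *
        Complex.exp (Complex.I * (2 * π * (φ (b + c * s) : ℂ))) * g s *
          Complex.exp (-(2 * π * μ * s) * Complex.I)) ∧
    ‖(∫ s : ℝ, (A (b + c * s) : ℂ) * Complex.exp (Complex.I * (2 * π * (φ (b + c * s) : ℂ))) *
          g s * Complex.exp (-(2 * π * μ * s) * Complex.I))
        - A b * Complex.exp (Complex.I * (2 * π * (φ b : ℂ))) *
          ∫ s : ℝ, g s * Complex.exp (-(2 * π * ((μ - c * deriv φ b : ℝ) : ℂ) * s) * Complex.I)‖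
      ≤ c * ε₁ * (∫ s, |s| ^ 1 * ‖g s‖) + π * ε₂ * c ^ 2 * A b * ∫ s, |s| ^ 2 * ‖g s‖ := by
  rw [← integral_const_mul]
  refine g.integrable_and_norm_integral_sub_le_of_norm_sub_le ?_ ?_ fun s => ?_
  · have := hA.continuous
    have := hφ.continuous
    exact (by fun_prop : Continuous _).aestronglyMeasurable
  · exact (g.integrable.mul_bdd (c := 1) (Continuous.aestronglyMeasurable (by fun_prop))
      (ae_of_all _ fun s => (Complex.norm_exp_neg_two_pi_mul_I _ s).le)).const_mul _
  · have hfreq : Complex.exp (-(2 * π * ((μ - c * deriv φ b : ℝ) : ℂ) * s) * Complex.I)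
        = Complex.exp (Complex.I * (2 * π * ((deriv φ b * (c * s) : ℝ) : ℂ)))
          * Complex.exp (-(2 * π * μ * s) * Complex.I) := by
      rw [← Complex.exp_add]; push_cast; ring_nf
    calc _ = ‖((A (b + c * s) : ℂ) * Complex.exp (Complex.I * (2 * π * (φ (b + c * s) : ℂ)))
          - A b * Complex.exp (Complex.I * (2 * π * (φ b : ℂ)))
            * Complex.exp (Complex.I * (2 * π * ((deriv φ b * (c * s) : ℝ) : ℂ))))
            * Complex.exp (-(2 * π * μ * s) * Complex.I)‖ * ‖g s‖ := by
          rw [hfreq, ← norm_mul]; ring_nf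
      _ ≤ (ε₁ * |c * s| + π * ε₂ * A b * (c * s) ^ 2) * ‖g s‖ := by
          rw [norm_mul, Complex.norm_exp_neg_two_pi_mul_I, mul_one]
          gcongr
          exact norm_mul_cexp_sub_linearization_le hA hA' hφ hφ' hφ'' hAb (c * s)
      _ = _ := by rw [abs_mul, abs_of_nonneg hc, mul_pow, ← sq_abs s]; ring

theorem integral_mul_inv_mul_comp_div_mul_cexp (F g : ℝ → ℂ) {σ : ℝ} (hσ : 0 < σ) (μ : ℝ) :
    ∫ t : ℝ, F t * (σ : ℂ)⁻¹ * g (t / σ) * Complex.exp (-(2 * π * μ * t) * Complex.I)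
      = ∫ s : ℝ, F (σ * s) * g s * Complex.exp (-(2 * π * ((σ * μ : ℝ) : ℂ) * s) * Complex.I) := by
  have hσ' : (σ : ℂ) ≠ 0 := by exact_mod_cast hσ.ne'
  have hrescale : ∀ t : ℝ,
      F t * (σ : ℂ)⁻¹ * g (t / σ) * Complex.exp (-(2 * π * μ * t) * Complex.I)
        = (σ : ℂ)⁻¹ * (F (σ * (t / σ)) * g (t / σ) *
          Complex.exp (-(2 * π * ((σ * μ : ℝ) : ℂ) * ((t / σ : ℝ) : ℂ)) * Complex.I)) := by
    intro t
    rw [mul_div_cancel₀ t hσ.ne']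
    push_cast
    field_simp
  simp_rw [hrescale]
  rw [integral_const_mul, Measure.integral_comp_div
      (fun s => F (σ * s) * g s * Complex.exp (-(2 * π * ((σ * μ : ℝ) : ℂ) * s) * Complex.I)),
    abs_of_pos hσ, Complex.real_smul, inv_mul_cancel_left₀ hσ']

theorem stmt_7_general (K : ℕ) (A : Fin K → ℝ → ℝ) (φ : Fin K → ℝ → ℝ)
    (g : SchwartzMap ℝ ℂ) (σ μ a ε₁ ε₂ : ℝ) (hσ : 0 < σ) (ha : 0 < a)
    (hA : ∀ k, ContDiff ℝ 1 (A k))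
    (hApos : ∀ k t, 0 < A k t)
    (hφ : ∀ k, ContDiff ℝ 2 (φ k))
    (hA' : ∀ k t, |deriv (A k) t| ≤ ε₁)
    (hφ'' : ∀ k t, |deriv (deriv (φ k)) t| ≤ ε₂)
    (b : ℝ) :
    ‖((∫ t : ℝ, (∑ k, ((A k (b + a * t) : ℝ) : ℂ) *
            Complex.exp (Complex.I * (2 * (π : ℂ) * ((φ k (b + a * t) : ℝ) : ℂ)))) *
          ((σ : ℂ))⁻¹ * g (t / σ) *
          Complex.exp (-(2 * (π : ℂ) * (μ : ℂ) * (t : ℂ)) * Complex.I))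
        - ∑ k, ((A k b : ℝ) : ℂ) *
            Complex.exp (Complex.I * (2 * (π : ℂ) * ((φ k b : ℝ) : ℂ))) *
            (∫ t : ℝ, g t *
              Complex.exp (-(2 * (π : ℂ) * ((σ * (μ - a * deriv (φ k) b) : ℝ) : ℂ) * (t : ℂ)) * Complex.I)))‖
      ≤ a * σ * (K * ε₁ * (∫ t : ℝ, |t| ^ 1 * ‖g t‖)
          + π * ε₂ * (∫ t : ℝ, |t| ^ 2 * ‖g t‖) * a * σ * (∑ k, A k b)) := by
  have hc : 0 ≤ a * σ := by positivity
  have hcomponent := fun k => norm_integral_mul_cexp_sub_linearization_le g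
    ((hA k).differentiable one_ne_zero) (hA' k) ((hφ k).differentiable two_ne_zero)
    (hφ k).differentiable_deriv_two (hφ'' k) (hApos k b).le hc (σ * μ)
  have hfreq : ∀ k, σ * (μ - a * deriv (φ k) b) = σ * μ - a * σ * deriv (φ k) b :=
    fun k => by ring
  rw [integral_mul_inv_mul_comp_div_mul_cexp _ _ hσ]
  simp only [Finset.sum_mul, (mul_assoc a σ _).symm, hfreq]
  rw [integral_finsetSum _ fun k _ => (hcomponent k).1, ← Finset.sum_sub_distrib]
  calc _ ≤ _ := norm_sum_le _ _
    _ ≤ _ := Finset.sum_le_sum fun k _ => (hcomponent k).2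
    _ = _ := by
        rw [Finset.sum_add_distrib, Finset.sum_const, Finset.card_univ, Fintype.card_fin,
          nsmul_eq_mul, ← Finset.sum_mul, ← Finset.mul_sum]
        ring

theorem stmt_7 (K : ℕ) (A : Fin K → ℝ → ℝ) (φ : Fin K → ℝ → ℝ)
    (g : SchwartzMap ℝ ℂ) (σ μ a ε₁ ε₂ : ℝ) (hσ : 0 < σ) (ha : 0 < a)
    (hA : ∀ k, ContDiff ℝ 1 (A k)) (hAbdd : ∀ k, ∃ C, ∀ t, |A k t| ≤ C)
    (hApos : ∀ k t, 0 < A k t)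
    (hφ : ∀ k, ContDiff ℝ 2 (φ k))
    (hA' : ∀ k t, |deriv (A k) t| ≤ ε₁)
    (hφ'' : ∀ k t, |deriv (deriv (φ k)) t| ≤ ε₂)
    (b : ℝ) :
    ‖((∫ t : ℝ, (∑ k, ((A k (b + a * t) : ℝ) : ℂ) *
            Complex.exp (Complex.I * (2 * (π : ℂ) * ((φ k (b + a * t) : ℝ) : ℂ)))) *
          ((σ : ℂ))⁻¹ * g (t / σ) *
          Complex.exp (-(2 * (π : ℂ) * (μ : ℂ) * (t : ℂ)) * Complex.I))
        - ∑ k, ((A k b : ℝ) : ℂ) *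
            Complex.exp (Complex.I * (2 * (π : ℂ) * ((φ k b : ℝ) : ℂ))) *
            (∫ t : ℝ, g t *
              Complex.exp (-(2 * (π : ℂ) * ((σ * (μ - a * deriv (φ k) b) : ℝ) : ℂ) * (t : ℂ)) * Complex.I)))‖
      ≤ a * σ * (K * ε₁ * (∫ t : ℝ, |t| ^ 1 * ‖g t‖)
          + π * ε₂ * (∫ t : ℝ, |t| ^ 2 * ‖g t‖) * a * σ * (∑ k, A k b)) :=
  stmt_7_general K A φ g σ μ a ε₁ ε₂ hσ ha hA hApos hφ hA' hφ'' b
end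

section
/- Let g ∈ 𝒮(ℝ), σ > 0, μ ∈ ℝ, a > 0. For φ ∈ C²(ℝ) define W̃^{g'}(a,b) = ∫ x(b+at)(1/σ)g'(t/σ)e^{−i2πμt}dt for x(t) = A e^{i2πφ(t)}. If x(b+at) is replaced by its chirp approximation x_m(t) = x(b)e^{i2π(φ'(b)at + ½φ''(b)a²t²)}, then ∫ x_m(t)(1/σ)g'(t/σ)e^{−i2πμt}dt = i2πσ x(b)(μ − aφ'(b)) G₀(a,b) − i2πa²σ² x(b) φ''(b) G₁(a,b), where G_j(a,b) = 𝔉(e^{iπφ''(b)a²σ²t²} t^j g(t))(σ(μ − aφ'(b))). -/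
open Real MeasureTheory Complex

/-! After the substitution `t = σu` the integral becomes `x(b) ∫ w(u) g'(u) du` for the modulated
chirp `w(u) = e^{iπcu²} e^{-2πiβu}`, with `c = φ''(b)a²σ²` and `β = σ(μ - aφ'(b))`. Integrating by
parts moves the derivative onto `w`, and `w' = 2πi(cu - β) w` splits the result into `G₀` and `G₁`. -/

noncomputable def chirpWave (c β t : ℝ) : ℂ :=
  cexp (I * π * c * (t : ℂ) ^ 2) * cexp (-(2 * π * β * t) * I)

section ChirpWave

variable (c β : ℝ)

theorem norm_chirpWave (t : ℝ) : ‖chirpWave c β t‖ = 1 := by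
  have h₁ : I * π * c * (t : ℂ) ^ 2 = ((π * c * t ^ 2 : ℝ) : ℂ) * I := by push_cast; ring
  have h₂ : -(2 * π * β * t) * I = ((-(2 * π * β * t) : ℝ) : ℂ) * I := by push_cast; ring
  rw [chirpWave, norm_mul, h₁, h₂, norm_exp_ofReal_mul_I, norm_exp_ofReal_mul_I, mul_one]

theorem continuous_chirpWave : Continuous (chirpWave c β) := by
  unfold chirpWave; fun_prop

theorem hasDerivAt_chirpWave (t : ℝ) :
    HasDerivAt (chirpWave c β) (2 * π * I * (c * t - β) * chirpWave c β t) t := by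
  have hw : chirpWave c β = fun s => cexp (((π * c * s ^ 2 - 2 * π * β * s : ℝ) : ℂ) * I) := by
    ext s; rw [chirpWave, ← Complex.exp_add]; push_cast; ring_nf
  have hphase : HasDerivAt (fun s => π * c * s ^ 2 - 2 * π * β * s) (2 * π * (c * t - β)) t := by
    refine (((hasDerivAt_pow 2 t).const_mul (π * c)).sub
      ((hasDerivAt_id' t).const_mul (2 * π * β))).congr_deriv ?_
    push_cast; ring
  rw [hw]
  convert (hphase.ofReal_comp.mul_const I).cexp using 1
  push_cast; ring

theorem MeasureTheory.Integrable.chirpWave_mul {f : ℝ → ℂ} (hf : Integrable f) :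
    Integrable (fun t => chirpWave c β t * f t) :=
  hf.bdd_mul (continuous_chirpWave c β).aestronglyMeasurable
    (Filter.Eventually.of_forall fun t => (norm_chirpWave c β t).le)

theorem SchwartzMap.integrable_deriv (g : SchwartzMap ℝ ℂ) : Integrable (deriv g) :=
  (SchwartzMap.derivCLM ℝ ℂ g).integrable.congr
    (Filter.Eventually.of_forall (SchwartzMap.derivCLM_apply ℝ g))

theorem SchwartzMap.integrable_ofReal_mul (g : SchwartzMap ℝ ℂ) :
    Integrable fun t : ℝ => (t : ℂ) * g t :=
  (g.integrable_pow_mul volume 1).mono' (by fun_prop)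
    (Filter.Eventually.of_forall fun t => by simp)

theorem integral_chirpWave_mul_deriv (g : SchwartzMap ℝ ℂ) :
    ∫ t, chirpWave c β t * deriv g t =
      2 * π * I * β * (∫ t, chirpWave c β t * g t)
        - 2 * π * I * c * ∫ t, chirpWave c β t * (t * g t) := by
  have hg := g.integrable.chirpWave_mul c β
  have hg₁ := g.integrable_ofReal_mul.chirpWave_mul c β
  have hderiv : Integrable fun t => 2 * π * I * (c * t - β) * chirpWave c β t * g t := by
    refine ((hg₁.const_mul (2 * π * I * c)).sub (hg.const_mul (2 * π * I * β))).congr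
      (Filter.Eventually.of_forall fun t => ?_)
    simp only [Pi.sub_apply]
    ring
  rw [integral_mul_deriv_eq_deriv_mul_of_integrable (fun t _ => hasDerivAt_chirpWave c β t)
      (fun t _ => g.differentiableAt.hasDerivAt) (g.integrable_deriv.chirpWave_mul c β) hderiv hg,
    ← integral_const_mul, ← integral_const_mul, ← integral_sub (hg.const_mul _) (hg₁.const_mul _),
    ← integral_neg]
  congr 1 with t
  ring

end ChirpWave

theorem exp_chirp_mul_exp_eq_chirpWave (p q a μ σ t : ℝ) (hσ : σ ≠ 0) :
    cexp (I * (2 * π * ((p * (a * t) + 1 / 2 * q * a ^ 2 * t ^ 2 : ℝ) : ℂ))) *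
        cexp (-(2 * π * μ * t) * I) =
      chirpWave (q * a ^ 2 * σ ^ 2) (σ * (μ - a * p)) (t / σ) := by
  have hσ₀ : (σ : ℂ) ≠ 0 := by exact_mod_cast hσ
  rw [chirpWave, ← Complex.exp_add, ← Complex.exp_add]
  congr 1
  push_cast
  field_simp
  ring

theorem stmt_11_general (g : SchwartzMap ℝ ℂ) (σ μ a : ℝ) (hσ : 0 < σ)
    (φ : ℝ → ℝ) (b : ℝ)
    -- `xb = x(b) = A e^{i2πφ(b)}`
    (xb : ℂ)
    -- the chirped moments `G_j(a,b) = 𝔉(e^{iπφ''(b)a²σ²t²} t^j g(t))(σ(μ − aφ'(b)))`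
    (G : ℕ → ℂ)
    (hG : ∀ j : ℕ, G j = ∫ t : ℝ,
      Complex.exp (Complex.I * (π : ℂ) * ((deriv (deriv φ) b * a ^ 2 * σ ^ 2 : ℝ) : ℂ) * (t : ℂ) ^ 2) *
        (t : ℂ) ^ j * g t *
        Complex.exp (-(2 * (π : ℂ) * ((σ * (μ - a * deriv φ b) : ℝ) : ℂ) * (t : ℂ)) * Complex.I)) :
    (∫ t : ℝ, (xb * Complex.exp (Complex.I * (2 * (π : ℂ) *
          ((deriv φ b * (a * t) + (1 / 2) * deriv (deriv φ) b * a ^ 2 * t ^ 2 : ℝ) : ℂ)))) *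
        ((σ : ℂ))⁻¹ * deriv (fun s : ℝ => g s) (t / σ) *
        Complex.exp (-(2 * (π : ℂ) * (μ : ℂ) * (t : ℂ)) * Complex.I))
      = Complex.I * 2 * (π : ℂ) * (σ : ℂ) * xb * ((μ - a * deriv φ b : ℝ) : ℂ) * G 0
        - Complex.I * 2 * (π : ℂ) * ((a ^ 2 * σ ^ 2 : ℝ) : ℂ) * xb *
            ((deriv (deriv φ) b : ℝ) : ℂ) * G 1 := by
  set c := deriv (deriv φ) b * a ^ 2 * σ ^ 2
  set β := σ * (μ - a * deriv φ b)
  have hGwave (j : ℕ) : G j = ∫ t, chirpWave c β t * ((t : ℂ) ^ j * g t) := by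
    rw [hG]; congr 1 with t; rw [chirpWave]; ring
  calc _ = ∫ t : ℝ, xb * (σ : ℂ)⁻¹ * (chirpWave c β (t / σ) * deriv g (t / σ)) := by
        congr 1 with t
        rw [← exp_chirp_mul_exp_eq_chirpWave _ _ _ μ σ t hσ.ne']
        ring
    _ = xb * ∫ t, chirpWave c β t * deriv g t := by
        have hσ₀ : (σ : ℂ) ≠ 0 := by exact_mod_cast hσ.ne'
        rw [integral_const_mul, Measure.integral_comp_div (fun t => chirpWave c β t * deriv g t),
          abs_of_pos hσ, Complex.real_smul]
        field_simp
    _ = _ := by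
        rw [integral_chirpWave_mul_deriv, hGwave, hGwave]
        simp only [pow_zero, pow_one, one_mul, c, β]
        push_cast
        ring

theorem stmt_11 (g : SchwartzMap ℝ ℂ) (σ μ a : ℝ) (hσ : 0 < σ) (ha : 0 < a)
    (φ : ℝ → ℝ) (hφ : ContDiff ℝ 2 φ) (A : ℝ) (hA : 0 < A) (b : ℝ)
    -- `xb = x(b) = A e^{i2πφ(b)}`
    (xb : ℂ) (hxb : xb = (A : ℂ) * Complex.exp (Complex.I * (2 * (π : ℂ) * ((φ b : ℝ) : ℂ))))
    -- the chirped moments `G_j(a,b) = 𝔉(e^{iπφ''(b)a²σ²t²} t^j g(t))(σ(μ − aφ'(b)))`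
    (G : ℕ → ℂ)
    (hG : ∀ j : ℕ, G j = ∫ t : ℝ,
      Complex.exp (Complex.I * (π : ℂ) * ((deriv (deriv φ) b * a ^ 2 * σ ^ 2 : ℝ) : ℂ) * (t : ℂ) ^ 2) *
        (t : ℂ) ^ j * g t *
        Complex.exp (-(2 * (π : ℂ) * ((σ * (μ - a * deriv φ b) : ℝ) : ℂ) * (t : ℂ)) * Complex.I)) :
    (∫ t : ℝ, (xb * Complex.exp (Complex.I * (2 * (π : ℂ) *
          ((deriv φ b * (a * t) + (1 / 2) * deriv (deriv φ) b * a ^ 2 * t ^ 2 : ℝ) : ℂ)))) *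
        ((σ : ℂ))⁻¹ * deriv (fun s : ℝ => g s) (t / σ) *
        Complex.exp (-(2 * (π : ℂ) * (μ : ℂ) * (t : ℂ)) * Complex.I))
      = Complex.I * 2 * (π : ℂ) * (σ : ℂ) * xb * ((μ - a * deriv φ b : ℝ) : ℂ) * G 0
        - Complex.I * 2 * (π : ℂ) * ((a ^ 2 * σ ^ 2 : ℝ) : ℂ) * xb *
            ((deriv (deriv φ) b : ℝ) : ℂ) * G 1 :=
  stmt_11_general g σ μ a hσ φ b xb G hG
end

section
/- Let the hypotheses of the adaptive CWT expansion hold: x(t) = Σ_{k=1}^K A_k(t)e^{i2πφ_k(t)} with |A'_k| ≤ ε₁, |φ''_k| ≤ ε₂, g ∈ 𝒮, and let Z_k = {(a,b) : |μ − aφ'_k(b)| < α/σ(b)} with |ĝ(ξ)| ≤ τ₀ for |ξ| ≥ α. Suppose ε̃₁ ≥ a₂(b)σ(b)Λ₁(b) + τ₀ Σ_{k=1}^K A_k(b), where Λ₁(b) = Kε₁I₁ + πε₂I₂ (μσ(b)+α)/φ'₁(b) Σ_j A_j(b), the zones Z_k are pairwise disjoint, and a ∈ [a₁(b), a₂(b)]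 = [(μ−α/σ(b))/φ'_K(b), (μ+α/σ(b))/φ'₁(b)]. If |W̃_x(a,b)| > ε̃₁ then there exists a unique k ∈ {1,…,K} with (a,b) ∈ Z_k. -/
/-!
Each component `A_k(b + a t) e^{2πi φ_k(b + a t)}` agrees with its linear-phase approximation
`A_k(b) e^{2πi (φ_k(b) + a t φ_k'(b))}` up to `ε₁ |a t| + A_k(b) π ε₂ (a t)²` (mean value theorem
for `A_k`, second-order Taylor bound for `φ_k`). Integrating against the window
`σ⁻¹ g(t/σ) e^{-2πiμt}` turns the linear-phase term into `A_k(b) e^{2πiφ_k(b)} ĝ(σ(μ - a φ_k'(b)))`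
and the error into `|a|σ (ε₁ I₁ + π ε₂ I₂ |a|σ A_k(b))`, where `I_n = ∫ |t|ⁿ |g t|`. If `a` lay in
no zone `Z_k`, every `ĝ` factor would be at most `τ₀`, and since `|a| ≤ a₂` the transform would be
at most the threshold. Uniqueness is the disjointness of the zones.
-/

open Real MeasureTheory
open scoped Complex
open Complex (I)

theorem abs_sub_le_of_abs_deriv_le {f f' : ℝ → ℝ} {C : ℝ} (hf : ∀ t, HasDerivAt f (f' t) t)
    (hC : ∀ t, |f' t| ≤ C) (x y : ℝ) : |f y - f x| ≤ C * |y - x| := by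
  simpa only [Real.norm_eq_abs] using Convex.norm_image_sub_le_of_norm_hasDerivWithin_le
    (fun t _ => (hf t).hasDerivWithinAt) (fun t _ => hC t) convex_univ
    (Set.mem_univ x) (Set.mem_univ y)

section Taylor

variable {f f' f'' : ℝ → ℝ} {ε : ℝ}

theorem abs_taylor_remainder_one_le_of_le (hf : ∀ t, HasDerivAt f (f' t) t)
    (hf' : ∀ t, HasDerivAt f' (f'' t) t) (hε : ∀ t, |f'' t| ≤ ε) {x y : ℝ} (hxy : x ≤ y) :
    |f y - f x - (y - x) * f' x| ≤ ε * (y - x) ^ 2 / 2 := by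
  have hr : ∀ u, HasDerivAt (fun u => f u - f x - (u - x) * f' x) (f' u - f' x) u := fun u =>
    (((hf u).sub_const (f x)).sub
      (((hasDerivAt_id u).sub_const x).mul_const (f' x))).congr_deriv (by ring)
  have hB : ∀ u, HasDerivAt (fun u => ε * (u - x) ^ 2 / 2) (ε * (u - x)) u := fun u =>
    ((((hasDerivAt_id u).sub_const x).pow 2).const_mul ε |>.div_const 2).congr_deriv
      (by simp only [id, Nat.cast_ofNat]; ring)
  refine image_norm_le_of_norm_deriv_right_le_deriv_boundary
    (fun u _ => (hr u).continuousAt.continuousWithinAt) (fun u _ => (hr u).hasDerivWithinAt)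
    (by simp) hB (fun u hu => ?_) ⟨hxy, le_rfl⟩
  simpa [abs_of_nonneg (sub_nonneg.2 hu.1)] using abs_sub_le_of_abs_deriv_le hf' hε x u

theorem abs_taylor_remainder_one_le (hf : ∀ t, HasDerivAt f (f' t) t)
    (hf' : ∀ t, HasDerivAt f' (f'' t) t) (hε : ∀ t, |f'' t| ≤ ε) (x y : ℝ) :
    |f y - f x - (y - x) * f' x| ≤ ε * (y - x) ^ 2 / 2 := by
  rcases le_total x y with hxy | hyx
  · exact abs_taylor_remainder_one_le_of_le hf hf' hε hxy
  · have hg : ∀ t, HasDerivAt (fun t => f (-t)) (-f' (-t)) t := fun t =>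
      ((hf (-t)).comp t (hasDerivAt_neg t)).congr_deriv (by ring)
    have hg' : ∀ t, HasDerivAt (fun t => -f' (-t)) (f'' (-t)) t := fun t =>
      ((hf' (-t)).comp t (hasDerivAt_neg t)).neg.congr_deriv (by ring)
    have := abs_taylor_remainder_one_le_of_le hg hg' (fun t => hε (-t)) (neg_le_neg hyx)
    simp only [neg_neg] at this
    convert this using 2 <;> ring

end Taylor

theorem norm_exp_mul_I_sub_exp_mul_I_le (θ₁ θ₂ : ℝ) :
    ‖cexp (I * θ₁) - cexp (I * θ₂)‖ ≤ |θ₁ - θ₂| := by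
  have h : cexp (I * θ₁) - cexp (I * θ₂) = cexp (I * θ₂) * (cexp (I * ↑(θ₁ - θ₂)) - 1) := by
    rw [mul_sub, ← Complex.exp_add]; push_cast; ring_nf
  rw [h, norm_mul, Complex.norm_exp_I_mul_ofReal, one_mul]
  exact Real.norm_exp_I_mul_ofReal_sub_one_le.trans_eq (Real.norm_eq_abs _)

theorem norm_ofReal_mul_exp_sub_le (A₁ A₂ θ₁ θ₂ : ℝ) :
    ‖(A₁ : ℂ) * cexp (I * θ₁) - A₂ * cexp (I * θ₂)‖ ≤ |A₁ - A₂| + |A₂| * |θ₁ - θ₂| := by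
  have h : (A₁ : ℂ) * cexp (I * θ₁) - A₂ * cexp (I * θ₂)
      = ((A₁ - A₂ : ℝ) : ℂ) * cexp (I * θ₁) + A₂ * (cexp (I * θ₁) - cexp (I * θ₂)) := by
    push_cast; ring
  rw [h]
  refine (norm_add_le _ _).trans (add_le_add ?_ ?_)
  · rw [norm_mul, Complex.norm_exp_I_mul_ofReal, mul_one, Complex.norm_real, Real.norm_eq_abs]
  · rw [norm_mul, Complex.norm_real, Real.norm_eq_abs]
    exact mul_le_mul_of_nonneg_left (norm_exp_mul_I_sub_exp_mul_I_le θ₁ θ₂) (abs_nonneg _)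

theorem norm_amplitude_phase_sub_linear_phase_le {A A' φ φ' φ'' : ℝ → ℝ} {ε₁ ε₂ : ℝ}
    (hA : ∀ t, HasDerivAt A (A' t) t) (hA' : ∀ t, |A' t| ≤ ε₁) (hφ : ∀ t, HasDerivAt φ (φ' t) t)
    (hφ' : ∀ t, HasDerivAt φ' (φ'' t) t) (hφ'' : ∀ t, |φ'' t| ≤ ε₂) (x h : ℝ) :
    ‖(A (x + h) : ℂ) * cexp (I * (2 * π * φ (x + h)))
        - A x * cexp (I * (2 * π * φ x)) * cexp (I * (2 * π * (φ' x * h)))‖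
      ≤ ε₁ * |h| + |A x| * (π * ε₂ * h ^ 2) := by
  have hamp := abs_sub_le_of_abs_deriv_le hA hA' x (x + h)
  have hphase := abs_taylor_remainder_one_le hφ hφ' hφ'' x (x + h)
  simp only [add_sub_cancel_left] at hamp hphase
  have key := norm_ofReal_mul_exp_sub_le (A (x + h)) (A x) (2 * π * φ (x + h))
    (2 * π * (φ x + φ' x * h))
  have hθ : |2 * π * φ (x + h) - 2 * π * (φ x + φ' x * h)| ≤ π * ε₂ * h ^ 2 := by
    rw [show 2 * π * φ (x + h) - 2 * π * (φ x + φ' x * h)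
        = 2 * π * (φ (x + h) - φ x - h * φ' x) by ring, abs_mul, abs_of_pos (by positivity)]
    nlinarith [pi_pos]
  have hlin : (A x : ℂ) * cexp (I * (2 * π * φ x)) * cexp (I * (2 * π * (φ' x * h)))
      = A x * cexp (I * ↑(2 * π * (φ x + φ' x * h))) := by
    rw [mul_assoc (A x : ℂ), ← Complex.exp_add]
    push_cast
    ring_nf
  rw [hlin]
  push_cast at key ⊢
  exact key.trans (add_le_add hamp (mul_le_mul_of_nonneg_left hθ (abs_nonneg _)))

-- With this window, the adaptive CWT is `W̃_x(a, b) = ∫ x(b + a t) * cwtWindow g σ μ t dt`.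
noncomputable def cwtWindow (g : ℝ → ℂ) (σ μ t : ℝ) : ℂ :=
  (σ : ℂ)⁻¹ * g (t / σ) * cexp (-(2 * π * μ * t) * I)

section Window

variable {σ μ : ℝ}

theorem norm_cwtWindow (g : ℝ → ℂ) (hσ : 0 < σ) (t : ℝ) :
    ‖cwtWindow g σ μ t‖ = σ⁻¹ * ‖g (t / σ)‖ := by
  rw [cwtWindow, norm_mul, norm_mul, norm_inv, Complex.norm_real, Real.norm_eq_abs,
    abs_of_pos hσ, Complex.norm_exp]
  simp

theorem continuous_cwtWindow {g : ℝ → ℂ} (hg : Continuous g) : Continuous (cwtWindow g σ μ) := by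
  unfold cwtWindow; fun_prop

theorem integral_abs_pow_mul_norm_cwtWindow (g : ℝ → ℂ) (hσ : 0 < σ) (n : ℕ) :
    ∫ t, |t| ^ n * ‖cwtWindow g σ μ t‖ = σ ^ n * ∫ s, |s| ^ n * ‖g s‖ := by
  have h : ∀ t, |t| ^ n * ‖cwtWindow g σ μ t‖ = σ ^ n * (|t / σ| ^ n * ‖g (t / σ)‖) * σ⁻¹ := by
    intro t
    rw [norm_cwtWindow g hσ, abs_div, abs_of_pos hσ, div_pow]
    field_simp
  simp_rw [h, integral_mul_const, integral_const_mul,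
    Measure.integral_comp_div (fun s => |s| ^ n * ‖g s‖), abs_of_pos hσ, smul_eq_mul]
  field_simp

theorem integrable_abs_pow_mul_norm_cwtWindow (g : SchwartzMap ℝ ℂ) (hσ : 0 < σ) (n : ℕ) :
    Integrable fun t => |t| ^ n * ‖cwtWindow g σ μ t‖ := by
  have hg : Integrable fun s => |s| ^ n * ‖g s‖ := by
    simpa only [Real.norm_eq_abs, norm_pow] using g.integrable_pow_mul volume n
  refine ((hg.comp_div hσ.ne').const_mul (σ ^ n * σ⁻¹)).congr (ae_of_all _ fun t => ?_)
  simp only [norm_cwtWindow g hσ, abs_div, abs_of_pos hσ, div_pow]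
  field_simp

theorem integrable_exp_mul_cwtWindow (g : SchwartzMap ℝ ℂ) (hσ : 0 < σ) (ν : ℝ) :
    Integrable fun t : ℝ => cexp (I * (2 * π * (ν * t))) * cwtWindow g σ μ t := by
  refine (integrable_abs_pow_mul_norm_cwtWindow (μ := μ) g hσ 0).mono' ?_ (ae_of_all _ fun t => ?_)
  · exact (by fun_prop : Continuous fun t : ℝ => cexp (I * (2 * π * (ν * t)))).mul
      (continuous_cwtWindow g.continuous) |>.aestronglyMeasurable
  · rw [norm_mul, Complex.norm_exp]
    simp

theorem integral_exp_mul_cwtWindow (g : ℝ → ℂ) (hσ : 0 < σ) (ν : ℝ) :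
    ∫ t : ℝ, cexp (I * (2 * π * (ν * t))) * cwtWindow g σ μ t
      = ∫ s, g s * cexp (-(2 * π * ((σ * (μ - ν) : ℝ) : ℂ) * s) * I) := by
  set G : ℝ → ℂ := fun s => g s * cexp (-(2 * π * ((σ * (μ - ν) : ℝ) : ℂ) * s) * I)
  have hσ' : (σ : ℂ) ≠ 0 := Complex.ofReal_ne_zero.2 hσ.ne'
  have h : ∀ t : ℝ, cexp (I * (2 * π * (ν * t))) * cwtWindow g σ μ t = (σ : ℂ)⁻¹ * G (t / σ) := by
    intro t
    simp only [cwtWindow, G]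
    rw [mul_comm, mul_assoc, mul_assoc, ← Complex.exp_add]
    push_cast
    field_simp
    ring_nf
  simp_rw [h, integral_const_mul, Measure.integral_comp_div G σ, abs_of_pos hσ, Complex.real_smul]
  field_simp

end Window

section Component

variable {A A' φ φ' φ'' : ℝ → ℝ} {ε₁ ε₂ σ : ℝ} (g : SchwartzMap ℝ ℂ) (μ a b : ℝ)

theorem norm_sub_linear_phase_mul_cwtWindow_le (hA : ∀ t, HasDerivAt A (A' t) t)
    (hA' : ∀ t, |A' t| ≤ ε₁) (hφ : ∀ t, HasDerivAt φ (φ' t) t)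
    (hφ' : ∀ t, HasDerivAt φ' (φ'' t) t) (hφ'' : ∀ t, |φ'' t| ≤ ε₂) (t : ℝ) :
    ‖(A (b + a * t) : ℂ) * cexp (I * (2 * π * φ (b + a * t))) * cwtWindow g σ μ t
        - A b * cexp (I * (2 * π * φ b))
          * (cexp (I * (2 * π * ((a * φ' b : ℝ) * t))) * cwtWindow g σ μ t)‖
      ≤ ε₁ * |a| * (|t| ^ 1 * ‖cwtWindow g σ μ t‖)
        + |A b| * (π * ε₂ * a ^ 2) * (|t| ^ 2 * ‖cwtWindow g σ μ t‖) := by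
  have h := norm_amplitude_phase_sub_linear_phase_le hA hA' hφ hφ' hφ'' b (a * t)
  rw [show ∀ X Y Z W : ℂ, X * W - Y * (Z * W) = (X - Y * Z) * W from fun _ _ _ _ => by ring,
    norm_mul]
  rw [show ((φ' b : ℝ) : ℂ) * ((a * t : ℝ) : ℂ) = ((a * φ' b : ℝ) : ℂ) * t by push_cast; ring] at h
  calc _ ≤ (ε₁ * |a * t| + |A b| * (π * ε₂ * (a * t) ^ 2)) * ‖cwtWindow g σ μ t‖ :=
        mul_le_mul_of_nonneg_right h (norm_nonneg _)
    _ = _ := by rw [abs_mul, mul_pow, sq_abs]; ring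

theorem integrable_amplitude_phase_mul_cwtWindow (hσ : 0 < σ) (hA : ∀ t, HasDerivAt A (A' t) t)
    (hA' : ∀ t, |A' t| ≤ ε₁) (hφ : ∀ t, HasDerivAt φ (φ' t) t)
    (hφ' : ∀ t, HasDerivAt φ' (φ'' t) t) (hφ'' : ∀ t, |φ'' t| ≤ ε₂) :
    Integrable fun t => (A (b + a * t) : ℂ) * cexp (I * (2 * π * φ (b + a * t)))
      * cwtWindow g σ μ t := by
  have hM : Integrable fun t : ℝ => A b * cexp (I * (2 * π * φ b))
      * (cexp (I * (2 * π * ((a * φ' b : ℝ) * t))) * cwtWindow g σ μ t) :=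
    (integrable_exp_mul_cwtWindow g hσ _).const_mul _
  have hD := ((integrable_abs_pow_mul_norm_cwtWindow (μ := μ) g hσ 1).const_mul (ε₁ * |a|)).add
    ((integrable_abs_pow_mul_norm_cwtWindow (μ := μ) g hσ 2).const_mul (|A b| * (π * ε₂ * a ^ 2)))
  have hW := continuous_cwtWindow (σ := σ) (μ := μ) g.continuous
  have hAc : Continuous A := continuous_iff_continuousAt.2 fun t => (hA t).continuousAt
  have hφc : Continuous φ := continuous_iff_continuousAt.2 fun t => (hφ t).continuousAt
  -- the difference from the linear-phase term is continuous and dominated by an integrable bound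
  have hdiff := hD.mono' (by fun_prop : Continuous fun t : ℝ =>
      (A (b + a * t) : ℂ) * cexp (I * (2 * π * φ (b + a * t))) * cwtWindow g σ μ t
        - A b * cexp (I * (2 * π * φ b))
          * (cexp (I * (2 * π * ((a * φ' b : ℝ) * t))) * cwtWindow g σ μ t)).aestronglyMeasurable
    (ae_of_all _ (norm_sub_linear_phase_mul_cwtWindow_le g μ a b hA hA' hφ hφ' hφ''))
  exact (hdiff.add hM).congr (ae_of_all _ fun t => sub_add_cancel _ _)

theorem norm_integral_amplitude_phase_mul_cwtWindow_sub_le (hσ : 0 < σ)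
    (hA : ∀ t, HasDerivAt A (A' t) t) (hA' : ∀ t, |A' t| ≤ ε₁) (hφ : ∀ t, HasDerivAt φ (φ' t) t)
    (hφ' : ∀ t, HasDerivAt φ' (φ'' t) t) (hφ'' : ∀ t, |φ'' t| ≤ ε₂) :
    ‖(∫ t, (A (b + a * t) : ℂ) * cexp (I * (2 * π * φ (b + a * t))) * cwtWindow g σ μ t)
      - A b * cexp (I * (2 * π * φ b))
        * ∫ s, g s * cexp (-(2 * π * ((σ * (μ - a * φ' b) : ℝ) : ℂ) * s) * I)‖
      ≤ |a| * σ * (ε₁ * (∫ s, |s| ^ 1 * ‖g s‖)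
        + π * ε₂ * (∫ s, |s| ^ 2 * ‖g s‖) * (|a| * σ) * |A b|) := by
  have hM : Integrable fun t : ℝ => A b * cexp (I * (2 * π * φ b))
      * (cexp (I * (2 * π * ((a * φ' b : ℝ) * t))) * cwtWindow g σ μ t) :=
    (integrable_exp_mul_cwtWindow g hσ _).const_mul _
  have hD₁ := integrable_abs_pow_mul_norm_cwtWindow (μ := μ) g hσ 1
  have hD₂ := integrable_abs_pow_mul_norm_cwtWindow (μ := μ) g hσ 2
  rw [← integral_exp_mul_cwtWindow g hσ, ← integral_const_mul,
    ← integral_sub (integrable_amplitude_phase_mul_cwtWindow g μ a b hσ hA hA' hφ hφ' hφ'') hM]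
  calc _ ≤ ∫ t, ε₁ * |a| * (|t| ^ 1 * ‖cwtWindow g σ μ t‖)
        + |A b| * (π * ε₂ * a ^ 2) * (|t| ^ 2 * ‖cwtWindow g σ μ t‖) :=
        norm_integral_le_of_norm_le ((hD₁.const_mul _).add (hD₂.const_mul _))
          (ae_of_all _ (norm_sub_linear_phase_mul_cwtWindow_le g μ a b hA hA' hφ hφ' hφ''))
    _ = _ := by
        rw [integral_add (hD₁.const_mul _) (hD₂.const_mul _), integral_const_mul,
          integral_const_mul, integral_abs_pow_mul_norm_cwtWindow g hσ,
          integral_abs_pow_mul_norm_cwtWindow g hσ, ← sq_abs a]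
        ring

theorem norm_integral_amplitude_phase_mul_cwtWindow_le (hσ : 0 < σ)
    (hA : ∀ t, HasDerivAt A (A' t) t) (hA' : ∀ t, |A' t| ≤ ε₁) (hφ : ∀ t, HasDerivAt φ (φ' t) t)
    (hφ' : ∀ t, HasDerivAt φ' (φ'' t) t) (hφ'' : ∀ t, |φ'' t| ≤ ε₂) {τ₀ : ℝ}
    (hτ₀ : ‖∫ s, g s * cexp (-(2 * π * ((σ * (μ - a * φ' b) : ℝ) : ℂ) * s) * I)‖ ≤ τ₀) :
    ‖∫ t, (A (b + a * t) : ℂ) * cexp (I * (2 * π * φ (b + a * t))) * cwtWindow g σ μ t‖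
      ≤ |A b| * τ₀ + |a| * σ * (ε₁ * (∫ s, |s| ^ 1 * ‖g s‖)
        + π * ε₂ * (∫ s, |s| ^ 2 * ‖g s‖) * (|a| * σ) * |A b|) := by
  refine (norm_le_norm_add_norm_sub' _ _).trans (add_le_add ?_
    (norm_integral_amplitude_phase_mul_cwtWindow_sub_le g μ a b hσ hA hA' hφ hφ' hφ''))
  rw [norm_mul, norm_mul, Complex.norm_real, Real.norm_eq_abs, Complex.norm_exp]
  simpa using mul_le_mul_of_nonneg_left hτ₀ (abs_nonneg (A b))

end Component

theorem abs_le_of_mem_Icc_sub_div_add_div {μ c d₀ d₁ a : ℝ} (hμ : 0 ≤ μ) (hd₀ : 0 < d₀)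
    (hd : d₀ ≤ d₁) (ha : a ∈ Set.Icc ((μ - c) / d₁) ((μ + c) / d₀)) : |a| ≤ (μ + c) / d₀ := by
  refine abs_le.2 ⟨?_, ha.2⟩
  rcases le_total 0 (μ - c) with h | h
  · have : 0 ≤ a := (div_nonneg h (hd₀.trans_le hd).le).trans ha.1
    linarith [ha.2]
  · calc -((μ + c) / d₀) ≤ (μ - c) / d₀ := by
          rw [← neg_div]; exact div_le_div_of_nonneg_right (by linarith) hd₀.le
      _ ≤ (μ - c) / d₁ := by
          have := div_le_div_of_nonneg_left (neg_nonneg.2 h) hd₀ hd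
          rw [neg_div, neg_div] at this
          linarith
      _ ≤ a := ha.1

theorem sum_mul_add_mul_le {ι : Type*} [Fintype ι] (w : ι → ℝ) (hw : ∀ i, 0 ≤ w i)
    {r s τ c₁ c₂ : ℝ} (hr : 0 ≤ r) (hrs : r ≤ s) (hc₁ : 0 ≤ c₁) (hc₂ : 0 ≤ c₂) :
    ∑ i, (w i * τ + r * (c₁ + c₂ * r * w i))
      ≤ s * (Fintype.card ι * c₁ + c₂ * s * ∑ i, w i) + τ * ∑ i, w i := by
  have hsum : ∑ i, (w i * τ + r * (c₁ + c₂ * r * w i))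
      = r * (Fintype.card ι * c₁ + c₂ * r * ∑ i, w i) + τ * ∑ i, w i := by
    simp only [Finset.sum_add_distrib, ← Finset.mul_sum, ← Finset.sum_mul, Finset.sum_const,
      Finset.card_univ, nsmul_eq_mul]
    ring
  have := Finset.sum_nonneg fun i (_ : i ∈ Finset.univ) => hw i
  have := hr.trans hrs
  rw [hsum]
  gcongr

theorem stmt_12 (K : ℕ) (hK : 0 < K)
    (A : Fin K → ℝ → ℝ) (φ : Fin K → ℝ → ℝ)
    (g : SchwartzMap ℝ ℂ) (σ α τ₀ μ ε₁ ε₂ εtilde₁ : ℝ) (b : ℝ)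
    (hσ : 0 < σ) (hμ : 0 < μ)
    (hA : ∀ k, ContDiff ℝ 1 (A k))
    (hApos : ∀ k t, 0 < A k t)
    (hφ : ∀ k, ContDiff ℝ 2 (φ k))
    (hφ'pos : ∀ k t, 0 < deriv (φ k) t)
    (hmono : ∀ k l : Fin K, k < l → ∀ t, deriv (φ k) t < deriv (φ l) t)
    (hA' : ∀ k t, |deriv (A k) t| ≤ ε₁)
    (hφ'' : ∀ k t, |deriv (deriv (φ k)) t| ≤ ε₂)
    -- `|ĝ(ξ)| ≤ τ₀` for `|ξ| ≥ α`
    (hghat : ∀ ξ : ℝ, α ≤ |ξ| →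
      ‖(∫ t : ℝ, g t *
        Complex.exp (-(2 * (π : ℂ) * (ξ : ℂ) * (t : ℂ)) * Complex.I))‖ ≤ τ₀)
    -- the scale-time zones (at time `b`)
    (Z : Fin K → Set ℝ)
    (hZ : ∀ k, Z k = {a : ℝ | |μ - a * deriv (φ k) b| < α / σ})
    (hdisj : Pairwise (Function.onFun Disjoint Z))
    -- the threshold condition `εtilde₁ ≥ a₂(b)σ(b)Λ₁(b) + τ₀ Σ_k A_k(b)`
    (hthr : εtilde₁ ≥ ((μ + α / σ) / deriv (φ ⟨0, hK⟩) b) * σ *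
        (K * ε₁ * (∫ t : ℝ, |t| ^ 1 * ‖g t‖)
          + π * ε₂ * (∫ t : ℝ, |t| ^ 2 * ‖g t‖) *
            ((μ * σ + α) / deriv (φ ⟨0, hK⟩) b) * (∑ j, A j b))
        + τ₀ * (∑ k, A k b))
    (a : ℝ)
    (ha : (μ - α / σ) / deriv (φ ⟨K - 1, by omega⟩) b ≤ a
        ∧ a ≤ (μ + α / σ) / deriv (φ ⟨0, hK⟩) b)
    -- the adaptive CWT exceeds the threshold
    (hW : ‖
      (∫ t : ℝ, (∑ k, ((A k (b + a * t) : ℝ) : ℂ) *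
          Complex.exp (Complex.I * (2 * (π : ℂ) * ((φ k (b + a * t) : ℝ) : ℂ)))) *
        ((σ : ℂ))⁻¹ * g (t / σ) *
        Complex.exp (-(2 * (π : ℂ) * (μ : ℂ) * (t : ℂ)) * Complex.I))‖ > εtilde₁) :
    ∃! k : Fin K, a ∈ Z k := by
  refine existsUnique_of_exists_of_unique ?_ fun k l hk hl =>
    by_contra fun hkl => Set.disjoint_left.1 (hdisj hkl) hk hl
  by_contra! hout
  set d₀ := deriv (φ ⟨0, hK⟩) b
  have hscale : (μ + α / σ) / d₀ * σ = (μ * σ + α) / d₀ := by field_simp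
  have haσ : |a| * σ ≤ (μ * σ + α) / d₀ := by
    have hd : d₀ ≤ deriv (φ ⟨K - 1, by omega⟩) b :=
      StrictMono.monotone (fun k l hkl => hmono k l hkl b) (Fin.mk_le_mk.2 (Nat.zero_le _))
    rw [← hscale]
    gcongr
    exact abs_le_of_mem_Icc_sub_div_add_div hμ.le (hφ'pos _ b) hd ha
  have hA_deriv k t : HasDerivAt (A k) (deriv (A k) t) t :=
    ((hA k).differentiable one_ne_zero t).hasDerivAt
  have hφ_deriv k t : HasDerivAt (φ k) (deriv (φ k) t) t :=
    ((hφ k).differentiable two_ne_zero t).hasDerivAt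
  have hφ'_deriv k t : HasDerivAt (deriv (φ k)) (deriv (deriv (φ k)) t) t :=
    (((contDiff_succ_iff_deriv (n := 1)).1 (hφ k)).2.2.differentiable one_ne_zero t).hasDerivAt
  have hε₁ : 0 ≤ ε₁ := (abs_nonneg _).trans (hA' ⟨0, hK⟩ 0)
  have hε₂ : 0 ≤ ε₂ := (abs_nonneg _).trans (hφ'' ⟨0, hK⟩ 0)
  have hfar k : α ≤ |σ * (μ - a * deriv (φ k) b)| := by
    have := hout k
    rw [hZ, Set.mem_ofPred_eq, not_lt, div_le_iff₀' hσ] at this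
    rwa [abs_mul, abs_of_pos hσ]
  refine hW.not_ge ?_
  calc _ = ‖∑ k, ∫ t : ℝ, (A k (b + a * t) : ℂ)
        * cexp (I * (2 * π * φ k (b + a * t))) * cwtWindow g σ μ t‖ := by
        rw [← integral_finsetSum _ fun k _ => integrable_amplitude_phase_mul_cwtWindow g μ a b hσ
          (hA_deriv k) (hA' k) (hφ_deriv k) (hφ'_deriv k) (hφ'' k)]
        simp only [cwtWindow, Finset.sum_mul, mul_assoc]
    _ ≤ _ := norm_sum_le _ _
    _ ≤ _ := Finset.sum_le_sum fun k _ => norm_integral_amplitude_phase_mul_cwtWindow_le g μ a b hσ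
        (hA_deriv k) (hA' k) (hφ_deriv k) (hφ'_deriv k) (hφ'' k) (hghat _ (hfar k))
    _ ≤ _ := by
        simp only [abs_of_pos (hApos _ b)]
        refine (sum_mul_add_mul_le (fun k => A k b) (fun k => (hApos k b).le) (by positivity) haσ
          (mul_nonneg hε₁ (integral_nonneg fun t => by positivity))
          (mul_nonneg (mul_nonneg pi_pos.le hε₂) (integral_nonneg fun t => by positivity))
          ).trans_eq ?_
        rw [Fintype.card_fin, hscale]
        ring
    _ ≤ εtilde₁ := hthr
end
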